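/- arXiv:1012.4076 — 6 statements merged into one kernel-verified Lean document; each statement's English description precedes it below -/
import Mathlib

section
/- Let 𝕂 be a Hausdorff topological field, X a set, and equip 𝕂^X with the product topology. If ℓ : 𝕂^X → 𝕂 is a continuous linear form, then ℓ(δ_x) = 0 for all but finitely many x ∈ X. -/
/-! By continuity at `0`, `ℓ⁻¹' {1}ᶜ` contains a basic neighbourhood of `0` in the product, hence
every function vanishing on some finite set `I`. Those functions form a subspace, whose image
under `ℓ` is a subspace of `K` missing `1`, i.e. zero; and `δ_x` vanishes on `I` for `x ∉ I`. -/

open Filter Topology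

theorem exists_finite_eqOn_zero_subset_of_mem_nhds_zero {X M : Type*} [TopologicalSpace M]
    [Zero M] {V : Set (X → M)} (hV : V ∈ 𝓝 0) :
    ∃ I : Set X, I.Finite ∧ {g | Set.EqOn g 0 I} ⊆ V := by
  rw [nhds_pi, mem_pi] at hV
  obtain ⟨I, hI, U, hU, hsub⟩ := hV
  exact ⟨I, hI, fun g hg => hsub fun i hi => by
    simpa only [hg hi] using mem_of_mem_nhds (hU i)⟩

theorem ContinuousLinearMap.exists_finite_eq_zero_of_eqOn_zero {K X M : Type*} [DivisionRing K]
    [TopologicalSpace K] [T1Space K] [TopologicalSpace M] [AddCommGroup M] [Module K M]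
    (ℓ : (X → M) →L[K] K) :
    ∃ I : Set X, I.Finite ∧ ∀ g, Set.EqOn g 0 I → ℓ g = 0 := by
  have hV : ℓ ⁻¹' {1}ᶜ ∈ 𝓝 0 :=
    ℓ.continuous.continuousAt.preimage_mem_nhds (by simp [isOpen_compl_singleton.mem_nhds])
  obtain ⟨I, hI, hsub⟩ := exists_finite_eqOn_zero_subset_of_mem_nhds_zero hV
  refine ⟨I, hI, fun g hg => ?_⟩
  by_contra hne
  have hscaled : (ℓ g)⁻¹ • g ∈ {g | Set.EqOn g 0 I} := fun i hi => by simp [hg hi]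
  exact hsub hscaled (by simp [inv_mul_cancel₀ hne])

theorem stmt6_general {K : Type*} [Field K] [TopologicalSpace K]
    [T2Space K] {X : Type*} [DecidableEq X] (ℓ : (X → K) →L[K] K) :
    {x : X | ℓ (Pi.single x (1 : K)) ≠ 0}.Finite := by
  obtain ⟨I, hI, hℓ⟩ := ℓ.exists_finite_eq_zero_of_eqOn_zero
  refine hI.subset fun x hx => ?_
  by_contra hxI
  exact hx (hℓ _ fun i hi => Pi.single_eq_of_ne (ne_of_mem_of_not_mem hi hxI) 1)

/-- Let `K` be a Hausdorff topological field, `X` a set, and equip `K^X = X → K` with the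
product topology.  If `ℓ : K^X → K` is a continuous linear form, then `ℓ(δ_x) = 0` for
all but finitely many `x ∈ X`. -/
theorem stmt6 {K : Type*} [Field K] [TopologicalSpace K] [IsTopologicalDivisionRing K]
    [T2Space K] {X : Type*} [DecidableEq X] (ℓ : (X → K) →L[K] K) :
    {x : X | ℓ (Pi.single x (1 : K)) ≠ 0}.Finite :=
  stmt6_general ℓ
end

section
/- Let 𝕂 be a Hausdorff topological field, X a set, and equip 𝕂^X with the product topology. Then the map Φ : 𝕂^(X) → (𝕂^X)′, Φ(p)(f) = ∑_{x∈X} p(x)f(x), is surjective: every continuous linear form ℓ on 𝕂^X equals Φ(p_ℓ) where p_ℓ ∈ 𝕂^(X) is defined by p_ℓ(x) = ℓ(δ_x); equivalently, ℓ(f) = ∑_{x∈X} ℓ(δ_x) f(x) for all f ∈ 𝕂^X. -/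
/-!
The preimage under `ℓ` of the open set `{1}ᶜ` (open as `K` is T1) is a neighbourhood of `0`, so it
contains a basic box `∏_{x ∈ I} t_x × ∏_{x ∉ I} K` with `I` finite. Every function vanishing on `I` lies in this box
together with all its multiples, so `ℓ` vanishes on it (otherwise some multiple is sent to `1`).
Hence `ℓ` only sees the finitely many coordinates in `I`, and is given by the finitely supported
`x ↦ ℓ(δ_x)`.
-/

open Filter Topology

theorem ContinuousLinearMap.exists_finset_forall_apply_eq_zero {K ι : Type*} [DivisionRing K]
    [TopologicalSpace K] [T1Space K] {E : ι → Type*} [∀ i, AddCommGroup (E i)]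
    [∀ i, Module K (E i)] [∀ i, TopologicalSpace (E i)] (ℓ : (∀ i, E i) →L[K] K) :
    ∃ I : Finset ι, ∀ g : ∀ i, E i, (∀ i ∈ I, g i = 0) → ℓ g = 0 := by
  have hU : ℓ ⁻¹' {1}ᶜ ∈ 𝓝 (0 : ∀ i, E i) :=
    ℓ.continuous.continuousAt.preimage_mem_nhds <| by simp
  rw [nhds_pi, mem_pi'] at hU
  obtain ⟨I, t, ht, hbox⟩ := hU
  refine ⟨I, fun g hg => by_contra fun hℓg => ?_⟩
  have hmem : (ℓ g)⁻¹ • g ∈ Set.pi (↑I) t := fun i hi => by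
    simpa [hg i hi] using mem_of_mem_nhds (ht i)
  exact hbox hmem (by simp [hℓg])

theorem LinearMap.apply_eq_sum_of_forall_mem_eq_zero {R M ι : Type*} [Ring R]
    [AddCommGroup M] [Module R M] [DecidableEq ι] (φ : (ι → R) →ₗ[R] M) {s : Finset ι}
    (hs : ∀ g : ι → R, (∀ i ∈ s, g i = 0) → φ g = 0) (f : ι → R) :
    φ f = ∑ i ∈ s, f i • φ (Pi.single i 1) := by
  have hrest : φ (f - ∑ i ∈ s, Pi.single i (f i)) = 0 :=
    hs _ fun i hi => by simp [Finset.sum_apply, Finset.sum_pi_single, hi]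
  rw [map_sub, sub_eq_zero, map_sum] at hrest
  rw [hrest]
  refine Finset.sum_congr rfl fun i _ => ?_
  rw [← map_smul, ← Pi.single_smul', smul_eq_mul, mul_one]

theorem stmt7_general {K : Type*} [Field K] [TopologicalSpace K]
    [T2Space K] {X : Type*} [DecidableEq X] (ℓ : (X → K) →L[K] K) :
    ∃ p : X →₀ K, (∀ x : X, p x = ℓ (Pi.single x (1 : K))) ∧
      ∀ f : X → K, ℓ f = ∑ x ∈ p.support, p x * f x := by
  obtain ⟨I, hI⟩ := ℓ.exists_finset_forall_apply_eq_zero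
  have hsupp : ∀ x, ℓ (Pi.single x 1) ≠ 0 → x ∈ I := fun x hx => by_contra fun hxI =>
    hx <| hI _ fun y hy => Pi.single_eq_of_ne (ne_of_mem_of_not_mem hy hxI) 1
  refine ⟨Finsupp.onFinset I _ hsupp, fun _ => rfl, fun f => ?_⟩
  have hsum := Finsupp.onFinset_sum hsupp (g := fun x c => c * f x) fun _ => zero_mul _
  rw [Finsupp.sum] at hsum
  calc ℓ f = ∑ x ∈ I, ℓ (Pi.single x 1) * f x :=
        (ℓ.toLinearMap.apply_eq_sum_of_forall_mem_eq_zero hI f).trans <|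
          Finset.sum_congr rfl fun _ _ => mul_comm _ _
    _ = _ := hsum.symm

/-- Let `K` be a Hausdorff topological field, `X` a set, and equip `K^X = X → K` with the
product topology.  The map `Φ : K^(X) → (K^X)'`, `Φ(p)(f) = ∑ x, p x * f x`, is
surjective: every continuous linear form `ℓ` on `K^X` equals `Φ(p_ℓ)` where
`p_ℓ(x) = ℓ(δ_x)`; equivalently `ℓ f = ∑ x, ℓ(δ_x) * f x` for all `f`. -/
theorem stmt7 {K : Type*} [Field K] [TopologicalSpace K] [IsTopologicalDivisionRing K]
    [T2Space K] {X : Type*} [DecidableEq X] (ℓ : (X → K) →L[K] K) :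
    ∃ p : X →₀ K, (∀ x : X, p x = ℓ (Pi.single x (1 : K))) ∧
      ∀ f : X → K, ℓ f = ∑ x ∈ p.support, p x * f x :=
  stmt7_general ℓ
end

section
/- Let 𝕂 be a topological field, X an infinite set, and equip 𝕂^X with the product topology. Then the topological dual (𝕂^X)′ is isomorphic (as a 𝕂-vector space) to 𝕂^(X) if, and only if, the topology of 𝕂 is Hausdorff. -/
/-!
The closure of `{0}` in a topological field is an ideal, so the topology is either Hausdorff or
indiscrete. If it is indiscrete, every linear form on `K^X` is continuous, and for infinite `X`
the algebraic dual of `K^X` has rank strictly larger than `rank K^X ≥ rank K^(X)`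
(Erdős–Kaplansky). If it is Hausdorff, a continuous linear form avoids the value `1` on a basic
neighbourhood of `0`, hence vanishes on all `g` vanishing on a finite set of coordinates;
so the coordinate projections form a basis of the topological dual.
-/

open Cardinal Module Set

theorem Field.t2Space_or_indiscreteTopology (K : Type*) [Field K] [TopologicalSpace K]
    [IsTopologicalRing K] : T2Space K ∨ IndiscreteTopology K := by
  have hclosure : closure ({0} : Set K) = ((⊥ : Ideal K).closure : Set K) := by
    simp [Ideal.closure]
  rcases (⊥ : Ideal K).closure.eq_bot_or_top with h | h
  · left
    rw [IsTopologicalAddGroup.t2Space_iff_zero_closed, ← closure_subset_iff_isClosed, hclosure, h]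
    simp
  · right
    refine .of_forall_inseparable fun x y => addGroup_inseparable_iff.2 ?_
    rw [← singleton_zero, hclosure, h]
    trivial

noncomputable def ContinuousLinearMap.coeLinearEquivOfIndiscrete (R M N : Type*) [CommSemiring R]
    [AddCommMonoid M] [Module R M] [TopologicalSpace M] [AddCommMonoid N] [Module R N]
    [TopologicalSpace N] [ContinuousAdd N] [ContinuousConstSMul R N] [IndiscreteTopology N] :
    (M →L[R] N) ≃ₗ[R] (M →ₗ[R] N) :=
  LinearEquiv.ofBijective (ContinuousLinearMap.coeLM R)
    ⟨ContinuousLinearMap.coe_injective, fun f => ⟨⟨f, continuous_of_indiscreteTopology⟩, rfl⟩⟩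

theorem Module.rank_finsupp_lt_rank_dual_pi (K X : Type*) [Field K] [Infinite X] :
    Module.rank K (X →₀ K) < Module.rank K ((X → K) →ₗ[K] K) := by
  have hle : Module.rank K (X →₀ K) ≤ Module.rank K (X → K) :=
    (Finsupp.lcoeFun (R := K) (M := K) (α := X)).rank_le_of_injective DFunLike.coe_injective
  have hinf : ℵ₀ ≤ Module.rank K (X →₀ K) := by
    rw [rank_finsupp_self]
    exact aleph0_le_lift.2 (aleph0_le_mk X)
  have hdual := lift_rank_lt_rank_dual (hinf.trans hle)
  rw [lift_id'] at hdual
  exact hle.trans_lt hdual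

namespace ContinuousLinearMap

theorem exists_finset_forall_apply_eq_zero_s8 {K ι : Type*} {M : ι → Type*} [Field K]
    [TopologicalSpace K] [T1Space K] [∀ i, AddCommGroup (M i)] [∀ i, Module K (M i)]
    [∀ i, TopologicalSpace (M i)] (φ : (∀ i, M i) →L[K] K) :
    ∃ s : Finset ι, ∀ g : ∀ i, M i, (∀ i ∈ s, g i = 0) → φ g = 0 := by
  have hφ : φ ⁻¹' {1}ᶜ ∈ nhds (0 : ∀ i, M i) :=
    φ.continuous.continuousAt.preimage_mem_nhds (by simp [isOpen_compl_singleton.mem_nhds])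
  rw [nhds_pi, Filter.mem_pi'] at hφ
  obtain ⟨s, t, ht, hst⟩ := hφ
  refine ⟨s, fun g hg => by_contra fun hφg => hst (a := (φ g)⁻¹ • g) (fun i hi => ?_) ?_⟩
  · simpa [hg i hi] using mem_of_mem_nhds (ht i)
  · simp [inv_mul_cancel₀ hφg]

theorem linearIndependent_proj (R X : Type*) [CommRing R] [TopologicalSpace R]
    [IsTopologicalRing R] : LinearIndependent R (fun x => proj x : X → (X → R) →L[R] R) := by
  classical
  rw [linearIndependent_iff]
  intro l hl
  ext x
  simpa [Finsupp.linearCombination_apply, Finsupp.sum, Pi.single_apply] using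
    congr($hl (Pi.single x 1))

variable {K X : Type*} [Field K] [TopologicalSpace K] [IsTopologicalRing K] [T1Space K]

theorem mem_span_range_proj (φ : (X → K) →L[K] K) :
    φ ∈ Submodule.span K (range (proj : X → (X → K) →L[K] K)) := by
  classical
  obtain ⟨s, hs⟩ := φ.exists_finset_forall_apply_eq_zero_s8
  have hφ : φ = ∑ x ∈ s, φ (Pi.single x 1) • proj x := by
    ext g
    have hsg := hs (g - ∑ x ∈ s, Pi.single x (g x)) fun i hi => by simp [Finset.sum_pi_single, hi]
    rw [map_sub, map_sum, sub_eq_zero] at hsg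
    rw [hsg, sum_apply]
    refine Finset.sum_congr rfl fun x _ => ?_
    rw [← mul_one (g x), ← smul_eq_mul, Pi.single_smul, map_smul]
    simp [mul_comm]
  rw [hφ]
  exact Submodule.sum_mem _ fun x _ => Submodule.smul_mem _ _ (Submodule.subset_span ⟨x, rfl⟩)

variable (K X)

noncomputable def basisProj : Basis X K ((X → K) →L[K] K) :=
  Basis.mk (linearIndependent_proj K X) fun φ _ => mem_span_range_proj φ

end ContinuousLinearMap

/-- Let `K` be a topological field (Hausdorff or not), `X` an infinite set, and equip
`K^X = X → K` with the product topology.  Then the topological dual `(K^X)'` is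
isomorphic, as a `K`-vector space, to the space `K^(X) = X →₀ K` of finitely
supported functions if, and only if, the topology of `K` is Hausdorff. -/
theorem stmt8 {K : Type*} [Field K] [TopologicalSpace K] [IsTopologicalDivisionRing K]
    (X : Type*) [Infinite X] :
    Nonempty ((X →₀ K) ≃ₗ[K] ((X → K) →L[K] K)) ↔ T2Space K := by
  refine ⟨fun ⟨e⟩ => ?_, fun _ => ⟨(ContinuousLinearMap.basisProj K X).repr.symm⟩⟩
  refine (Field.t2Space_or_indiscreteTopology K).resolve_right fun _ => ?_
  exact (rank_finsupp_lt_rank_dual_pi K X).ne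
    (e.trans (ContinuousLinearMap.coeLinearEquivOfIndiscrete K (X → K) K)).rank_eq
end

section
/- Let 𝕂 be a Hausdorff topological field, X and Y sets, and equip 𝕂^X and 𝕂^Y with the product topologies. For a continuous linear map φ : 𝕂^X → 𝕂^Y, define M_φ : Y × X → 𝕂 by M_φ(y,x) = φ(δ_x)(y). Then M_φ is row-finite, i.e., M_φ ∈ 𝕂^{Y×(X)} ( for each y ∈ Y, the set { x ∈ X : M_φ(y,x) ≠ 0 } is finite ), and the map φ ↦ M_φ from L(𝕂^X, 𝕂^Y) to 𝕂^{Y×(X)} is injective. -/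
open Topology

theorem exists_finset_of_mem_nhds_pi {ι : Type*} {α : ι → Type*} [∀ i, TopologicalSpace (α i)]
    {f : ∀ i, α i} {U : Set (∀ i, α i)} (hU : U ∈ 𝓝 f) :
    ∃ I : Finset ι, ∀ g, (∀ i ∈ I, g i = f i) → g ∈ U := by
  rw [nhds_pi, Filter.mem_pi'] at hU
  obtain ⟨I, t, ht, hsub⟩ := hU
  refine ⟨I, fun g hg => hsub fun i hi => ?_⟩
  rw [hg i hi]
  exact mem_of_mem_nhds (ht i)

section SingleBasis

variable {R X : Type*} [TopologicalSpace R] [DecidableEq X]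

/-- `ℓ ⁻¹' {1}ᶜ` contains every function vanishing on some finite `I`; for `x ∉ I` with
`ℓ (Pi.single x 1) ≠ 0`, the rescaling `(ℓ (Pi.single x 1))⁻¹ • Pi.single x 1` is such a function
on which `ℓ` takes the value `1`. -/
theorem ContinuousLinearMap.finite_setOf_apply_single_ne_zero [DivisionRing R] [T1Space R]
    (ℓ : (X → R) →L[R] R) :
    {x : X | ℓ (Pi.single x 1) ≠ 0}.Finite := by
  have hU : ℓ ⁻¹' {1}ᶜ ∈ 𝓝 (0 : X → R) :=
    ℓ.continuous.continuousAt.preimage_mem_nhds <| by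
      rw [map_zero]; exact isOpen_compl_singleton.mem_nhds (zero_ne_one' R)
  obtain ⟨I, hI⟩ := exists_finset_of_mem_nhds_pi hU
  refine I.finite_toSet.subset fun x hx => ?_
  by_contra hxI
  have hvanish : ∀ i ∈ I, ((ℓ (Pi.single x 1))⁻¹ • Pi.single x (1 : R)) i = (0 : X → R) i :=
    fun i hi => by simp [ne_of_mem_of_not_mem hi hxI]
  exact hI _ hvanish (by simp [inv_mul_cancel₀ hx])

theorem dense_span_range_single [Semiring R] :
    Dense (Submodule.span R (Set.range fun x : X => Pi.single x (1 : R)) : Set (X → R)) := by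
  refine fun f => mem_closure_iff_nhds.mpr fun U hU => ?_
  obtain ⟨I, hI⟩ := exists_finset_of_mem_nhds_pi hU
  refine ⟨∑ x ∈ I, f x • Pi.single x 1, hI _ fun i hi => ?_, ?_⟩
  · simp [Finset.sum_apply, Pi.single_apply, hi]
  · exact Submodule.sum_mem _ fun x _ =>
      Submodule.smul_mem _ _ (Submodule.subset_span ⟨x, rfl⟩)

theorem ContinuousLinearMap.ext_single [Semiring R] {M : Type*} [TopologicalSpace M]
    [AddCommMonoid M] [Module R M] [T2Space M] {φ ψ : (X → R) →L[R] M}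
    (h : ∀ x, φ (Pi.single x 1) = ψ (Pi.single x 1)) : φ = ψ :=
  ext_on dense_span_range_single (by rintro _ ⟨x, rfl⟩; exact h x)

end SingleBasis

theorem stmt10_general {K : Type*} [Field K] [TopologicalSpace K]
    [T2Space K] (X Y : Type*) [DecidableEq X] :
    (∀ φ : (X → K) →L[K] (Y → K), ∀ y : Y,
        {x : X | φ (Pi.single x (1 : K)) y ≠ 0}.Finite) ∧
    Function.Injective
      (fun (φ : (X → K) →L[K] (Y → K)) => fun (y : Y) (x : X) =>
        φ (Pi.single x (1 : K)) y) :=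
  ⟨fun φ y => (ContinuousLinearMap.proj y ∘L φ).finite_setOf_apply_single_ne_zero,
    fun _ _ h => ContinuousLinearMap.ext_single fun x => funext fun y => congrFun (congrFun h y) x⟩

/-- Let `K` be a Hausdorff topological field and `X`, `Y` sets, with `K^X` and `K^Y`
carrying the product topologies.  For a continuous linear map `φ : K^X → K^Y`, the
matrix `M_φ(y, x) = φ(δ_x)(y)` is row-finite (for each `y`, the set
`{x | M_φ(y,x) ≠ 0}` is finite), and the map `φ ↦ M_φ` is injective. -/
theorem stmt10 {K : Type*} [Field K] [TopologicalSpace K] [IsTopologicalDivisionRing K]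
    [T2Space K] (X Y : Type*) [DecidableEq X] :
    (∀ φ : (X → K) →L[K] (Y → K), ∀ y : Y,
        {x : X | φ (Pi.single x (1 : K)) y ≠ 0}.Finite) ∧
    Function.Injective
      (fun (φ : (X → K) →L[K] (Y → K)) => fun (y : Y) (x : X) =>
        φ (Pi.single x (1 : K)) y) :=
  stmt10_general X Y
end

section
/- Let (𝕂, τ) be a Hausdorff topological field and X a set; equip 𝕂^X with the weak topology induced by the linear forms f ↦ ∑_{x∈X} p(x)f(x) for p ∈ 𝕂^(X). Then a linear form ℓ : 𝕂^X → 𝕂 is continuous for this weak topology if, and only if, it is continuous for the product topology; consequently the weak dual (𝕂^X)′_w is isomorphic, as a 𝕂-vector space, to 𝕂^(X). -/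
/-- The weak topology on `K^X = X → K`: the coarsest topology making every linear form
`f ↦ ∑ x, p x * f x`, `p ∈ K^(X)`, continuous into `(K, τ)`. -/
def weakTop (K : Type*) [Field K] (τ : TopologicalSpace K) (X : Type*) :
    TopologicalSpace (X → K) :=
  ⨅ p : X →₀ K,
    TopologicalSpace.induced (fun f : X → K => ∑ x ∈ p.support, p x * f x) τ

/-! The pairing with `Finsupp.single x 1` is the coordinate `f ↦ f x`, and every pairing is a
finite combination of coordinates, so the weak topology is the product topology. A linear form `ℓ`
continuous for the product topology avoids `1` on a basic neighbourhood of `0`; such a neighbourhood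
contains the line `K • f` of every `f` vanishing on some finite `S ⊆ X`, so `ℓ` kills these `f` and
is the pairing with `x ↦ ℓ (Pi.single x 1)` restricted to `S`. -/

open Topology

section

variable {K : Type*} [Field K] {X : Type*}

noncomputable def finsuppPairing : (X →₀ K) →ₗ[K] ((X → K) →ₗ[K] K) :=
  Finsupp.linearCombination K LinearMap.proj

theorem finsuppPairing_apply (p : X →₀ K) (f : X → K) :
    finsuppPairing p f = ∑ x ∈ p.support, p x * f x := by
  simp [finsuppPairing, Finsupp.linearCombination_apply, Finsupp.sum]

theorem finsuppPairing_apply_single [DecidableEq X] (p : X →₀ K) (x : X) :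
    finsuppPairing p (Pi.single x 1) = p x := by
  simp [finsuppPairing_apply, Pi.single_apply]

theorem finsuppPairing_injective : Function.Injective (finsuppPairing (K := K) (X := X)) := by
  classical
  intro p q h
  ext x
  rw [← finsuppPairing_apply_single p x, ← finsuppPairing_apply_single q x, h]

theorem mem_range_finsuppPairing_of_forall_eq_zero (ℓ : (X → K) →ₗ[K] K) (S : Finset X)
    (hS : ∀ f : X → K, (∀ x ∈ S, f x = 0) → ℓ f = 0) :
    ℓ ∈ LinearMap.range finsuppPairing := by
  classical
  have hℓ : ℓ = ∑ x ∈ S, ℓ (Pi.single x 1) • LinearMap.proj x := by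
    ext f
    have hf : ℓ (f - ∑ x ∈ S, Pi.single x (f x)) = 0 :=
      hS _ fun x hx => by simp [Finset.sum_pi_single, hx]
    rw [map_sub, sub_eq_zero, map_sum] at hf
    simp only [hf, LinearMap.sum_apply, LinearMap.smul_apply, LinearMap.proj_apply, smul_eq_mul]
    refine Finset.sum_congr rfl fun x _ => ?_
    rw [mul_comm, ← smul_eq_mul, ← map_smul, ← Pi.single_smul, smul_eq_mul, mul_one]
  rw [finsuppPairing, Finsupp.range_linearCombination, hℓ]
  exact Submodule.sum_mem _ fun x _ => Submodule.smul_mem _ _ (Submodule.subset_span ⟨x, rfl⟩)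

variable [τ : TopologicalSpace K]

theorem continuous_finsuppPairing [ContinuousAdd K] [ContinuousMul K] (p : X →₀ K) :
    Continuous (finsuppPairing p) := by
  refine (continuous_finsetSum p.support fun x _ => ?_).congr fun f =>
    (finsuppPairing_apply p f).symm
  exact continuous_const.mul (continuous_apply x)

theorem weakTop_eq_pi [ContinuousAdd K] [ContinuousMul K] :
    weakTop K τ X = Pi.topologicalSpace := by
  have hforms : ∀ p : X →₀ K,
      (fun f : X → K => ∑ x ∈ p.support, p x * f x) = finsuppPairing p :=
    fun p => funext fun f => (finsuppPairing_apply p f).symm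
  simp only [weakTop, hforms]
  refine le_antisymm (le_iInf fun x => ?_) (le_iInf fun p => ?_)
  · have hsingle : ⇑(finsuppPairing (Finsupp.single x (1 : K))) = fun f => f x := by
      ext f; simp [finsuppPairing]
    exact (iInf_le _ (Finsupp.single x 1)).trans_eq (by rw [hsingle])
  · exact continuous_iff_le_induced.mp (continuous_finsuppPairing p)

theorem exists_finset_eq_zero_of_continuous [T1Space K] (ℓ : (X → K) →ₗ[K] K)
    (hℓ : Continuous ℓ) : ∃ S : Finset X, ∀ f : X → K, (∀ x ∈ S, f x = 0) → ℓ f = 0 := by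
  have hU : ℓ ⁻¹' {1}ᶜ ∈ 𝓝 (0 : X → K) :=
    hℓ.continuousAt.preimage_mem_nhds (isOpen_compl_singleton.mem_nhds (by simp))
  rw [nhds_pi, Filter.mem_pi] at hU
  obtain ⟨I, hI, V, hV, hIV⟩ := hU
  refine ⟨hI.toFinset, fun f hf => ?_⟩
  by_contra hne
  -- `I.pi V` contains the whole line `K • f`, on which `ℓ` would take the value `1`
  have hline : (ℓ f)⁻¹ • f ∈ I.pi V := fun x hx => by
    rw [Pi.smul_apply, hf x (hI.mem_toFinset.mpr hx), smul_zero]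
    exact mem_of_mem_nhds (hV x)
  exact hIV hline (by rw [Set.mem_singleton_iff, map_smul, smul_eq_mul, inv_mul_cancel₀ hne] :
    ℓ ((ℓ f)⁻¹ • f) ∈ ({1} : Set K))

theorem continuous_iff_mem_range_finsuppPairing [ContinuousAdd K] [ContinuousMul K] [T1Space K]
    (ℓ : (X → K) →ₗ[K] K) : Continuous ℓ ↔ ℓ ∈ LinearMap.range finsuppPairing := by
  refine ⟨fun hℓ => ?_, ?_⟩
  · obtain ⟨S, hS⟩ := exists_finset_eq_zero_of_continuous ℓ hℓ
    exact mem_range_finsuppPairing_of_forall_eq_zero ℓ S hS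
  · rintro ⟨p, rfl⟩
    exact continuous_finsuppPairing p

end

/-- Let `(K, τ)` be a Hausdorff topological field and `X` a set; equip `K^X` with the
weak topology induced by the linear forms `f ↦ ∑ x, p x * f x`, `p ∈ K^(X)`.  A linear
form `ℓ : K^X → K` is continuous for this weak topology iff it is continuous for the
product topology; consequently the weak dual of `K^X` is isomorphic, as a `K`-vector
space, to `K^(X)`: there is an injective linear map `Φ` from `K^(X)` into the algebraic
dual, given by the dual pairing, whose range is exactly the set of weakly continuous
linear forms. -/
theorem stmt14 {K : Type*} [Field K] [τ : TopologicalSpace K] [IsTopologicalDivisionRing K]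
    [T2Space K] (X : Type*) :
    (∀ ℓ : (X → K) →ₗ[K] K,
        @Continuous (X → K) K (weakTop K τ X) τ ℓ ↔
          @Continuous (X → K) K Pi.topologicalSpace τ ℓ) ∧
    ∃ Φ : (X →₀ K) →ₗ[K] ((X → K) →ₗ[K] K),
      Function.Injective Φ ∧
      (∀ (p : X →₀ K) (f : X → K), Φ p f = ∑ x ∈ p.support, p x * f x) ∧
      (∀ ℓ : (X → K) →ₗ[K] K,
        @Continuous (X → K) K (weakTop K τ X) τ ℓ ↔ ℓ ∈ Set.range Φ) := by
  rw [weakTop_eq_pi]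
  exact ⟨fun ℓ => Iff.rfl, finsuppPairing, finsuppPairing_injective, finsuppPairing_apply,
    continuous_iff_mem_range_finsuppPairing⟩
end

section
/- Let 𝕂 be a field with the discrete topology and X a set; equip 𝕂^X with the product topology and 𝕂^(X) with the subspace topology induced from 𝕂^X. Then the map Ψ sending a continuous linear form ℓ on 𝕂^(X) to the linear form Ψ(ℓ) : 𝕂^X → 𝕂, f ↦ ∑_{x∈X} f(x) ℓ(δ_x), is well defined (Ψ(ℓ) is continuous and the family (f(x)ℓ(δ_x))_{x∈X} is summable), Ψ(ℓ) extends ℓ (Ψ(ℓ) agrees with ℓ on 𝕂^(X)), and Ψ is a linear isomorphism from (𝕂^(X))′ onto (𝕂^X)′. -/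
/-! A neighbourhood of a point of a product of discrete spaces constrains only finitely many
coordinates, so a continuous linear form `φ` on `K^X`, or on the subspace `K^(X)`, vanishes on
all functions that vanish on some finite set `S`. Hence `φ f = ∑_{x ∈ S} f x φ(δ_x)` and
`φ(δ_x) = 0` off `S`. This makes restriction `(K^X)' → (K^(X))'` injective (a form is determined
by its values on the `δ_x`) and surjective (`ℓ` is the restriction of `∑_{x ∈ S} ℓ(δ_x) pr_x`);
its inverse is `Ψ`. -/

/-- The subspace `K^(X)` of finitely supported functions, as a submodule of `K^X`;
as a subtype of `X → K` it carries the subspace topology induced by the product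
topology on `X → K`. -/
def finSuppSubmodule (K : Type*) [Field K] (X : Type*) : Submodule K (X → K) where
  carrier := {f | (Function.support f).Finite}
  add_mem' := fun hf hg => ((hf.union hg).subset (Function.support_add _ _))
  zero_mem' := by simp
  smul_mem' := by
    intro c f hf
    refine hf.subset fun x hx => ?_
    simp only [Function.mem_support, Pi.smul_apply, smul_eq_mul] at hx ⊢
    intro h
    exact hx (by rw [h, mul_zero])

/-- The characteristic function `δ_x` as an element of `K^(X)`. -/
def deltaFin (K : Type*) [Field K] {X : Type*} [DecidableEq X] (x : X) :
    finSuppSubmodule K X :=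
  ⟨Pi.single x (1 : K), by
    show (Function.support (Pi.single x (1 : K))).Finite
    exact (Set.finite_singleton x).subset Pi.support_single_subset⟩

@[simp]
theorem coe_deltaFin {K X : Type*} [Field K] [DecidableEq X] (x : X) :
    (deltaFin K x : X → K) = Pi.single x 1 :=
  rfl

open Topology

theorem Topology.IsInducing.exists_finset_of_continuous_discrete {X M Y : Type*} {K : X → Type*}
    [∀ x, TopologicalSpace (K x)] [∀ x, DiscreteTopology (K x)] [TopologicalSpace M]
    [TopologicalSpace Y] [DiscreteTopology Y] {ι : M → ∀ x, K x} (hι : IsInducing ι)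
    {g : M → Y} (hg : Continuous g) (m₀ : M) :
    ∃ S : Finset X, ∀ m, (∀ x ∈ S, ι m x = ι m₀ x) → g m = g m₀ := by
  have hg₀ : g ⁻¹' {g m₀} ∈ 𝓝 m₀ := ((isOpen_discrete _).preimage hg).mem_nhds rfl
  rw [hι.nhds_eq_comap, Filter.mem_comap] at hg₀
  obtain ⟨U, hU, hUg⟩ := hg₀
  rw [nhds_pi, Filter.mem_pi] at hU
  obtain ⟨I, hI, t, ht, hIt⟩ := hU
  refine ⟨hI.toFinset, fun m hm => hUg (hIt fun x hx => ?_)⟩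
  rw [hm x (hI.mem_toFinset.2 hx)]
  exact mem_of_mem_nhds (ht x)

section InducedTopology

variable {K X M : Type*} [Ring K] [TopologicalSpace K] [DiscreteTopology K] [DecidableEq X]
  [AddCommGroup M] [Module K M] [TopologicalSpace M] {ι : M →ₗ[K] X → K}
  {e : X → M}

theorem exists_finset_eq_sum_mul_of_isInducing (hι : IsInducing ι)
    (he : ∀ x, ι (e x) = Pi.single x 1) (φ : M →L[K] K) :
    ∃ S : Finset X, (∀ x ∉ S, φ (e x) = 0) ∧ ∀ m, φ m = ∑ x ∈ S, ι m x * φ (e x) := by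
  obtain ⟨S, hS⟩ := hι.exists_finset_of_continuous_discrete φ.continuous 0
  simp only [map_zero, Pi.zero_apply] at hS
  refine ⟨S, fun x hx => hS _ fun y hy => ?_, fun m => ?_⟩
  · rw [he, Pi.single_eq_of_ne (ne_of_mem_of_not_mem hy hx)]
  · have hvanish : φ (m - ∑ x ∈ S, ι m x • e x) = 0 :=
      hS _ fun y hy => by simp [he, Pi.single_apply, hy]
    rw [map_sub, sub_eq_zero, map_sum] at hvanish
    simpa using hvanish

theorem hasSum_mul_of_isInducing (hι : IsInducing ι)
    (he : ∀ x, ι (e x) = Pi.single x 1) (φ : M →L[K] K) (m : M) :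
    HasSum (fun x => ι m x * φ (e x)) (φ m) := by
  obtain ⟨S, hS, hsum⟩ := exists_finset_eq_sum_mul_of_isInducing hι he φ
  rw [hsum m]
  exact hasSum_sum_of_ne_finset_zero fun x hx => by rw [hS x hx, mul_zero]

theorem ContinuousLinearMap.hasSum_mul_apply_single (L : (X → K) →L[K] K) (f : X → K) :
    HasSum (fun x => f x * L (Pi.single x 1)) (L f) := by
  have hid : IsInducing (LinearMap.id : (X → K) →ₗ[K] X → K) := by
    rw [LinearMap.id_coe]; exact .id
  exact hasSum_mul_of_isInducing hid (fun _ => rfl) L f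

end InducedTopology

theorem exists_finset_eq_sum_mul_deltaFin {K X : Type*} [Field K] [TopologicalSpace K]
    [DiscreteTopology K] [DecidableEq X] (ℓ : finSuppSubmodule K X →L[K] K) :
    ∃ S : Finset X, ∀ p : finSuppSubmodule K X, ℓ p = ∑ x ∈ S, (p : X → K) x * ℓ (deltaFin K x) :=
  (exists_finset_eq_sum_mul_of_isInducing (ι := (finSuppSubmodule K X).subtype)
    (by rw [Submodule.coe_subtype]; exact .subtypeVal) (fun _ => rfl) ℓ).imp fun _ => And.right

section Restriction

variable {K : Type*} [Field K] [TopologicalSpace K] [IsTopologicalRing K] {X : Type*}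

variable (K X) in
def restrictFinSupp : ((X → K) →L[K] K) →ₗ[K] (finSuppSubmodule K X →L[K] K) where
  toFun L := L.comp (finSuppSubmodule K X).subtypeL
  map_add' _ _ := rfl
  map_smul' _ _ := rfl

theorem restrictFinSupp_apply (L : (X → K) →L[K] K) (p : finSuppSubmodule K X) :
    restrictFinSupp K X L p = L p :=
  rfl

variable [DiscreteTopology K] [DecidableEq X]

theorem restrictFinSupp_injective : Function.Injective (restrictFinSupp K X) := by
  intro L L' h
  have hδ : ∀ x, L (Pi.single x 1) = L' (Pi.single x 1) := fun x =>
    DFunLike.congr_fun h (deltaFin K x)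
  ext f
  exact (L.hasSum_mul_apply_single f).unique
    (by simpa only [hδ] using L'.hasSum_mul_apply_single f)

theorem restrictFinSupp_surjective : Function.Surjective (restrictFinSupp K X) := by
  intro ℓ
  obtain ⟨S, hS⟩ := exists_finset_eq_sum_mul_deltaFin ℓ
  refine ⟨∑ x ∈ S, ℓ (deltaFin K x) • ContinuousLinearMap.proj x, ?_⟩
  ext p
  simp [restrictFinSupp_apply, hS p, mul_comm]

end Restriction

/-- Let `K` be a field with the discrete topology, `X` a set; equip `K^X` with the
product topology and `K^(X)` with the subspace topology.  The map `Ψ` sending a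
continuous linear form `ℓ` on `K^(X)` to `Ψ(ℓ) : f ↦ ∑ x, f x * ℓ(δ_x)` is well
defined (`Ψ ℓ` is continuous and the family `(f x * ℓ(δ_x))_x` is summable with sum
`Ψ ℓ f`), `Ψ ℓ` extends `ℓ`, and `Ψ` is a linear isomorphism from `(K^(X))'` onto
`(K^X)'`. -/
theorem stmt16 {K : Type*} [Field K] [TopologicalSpace K] [DiscreteTopology K]
    [IsTopologicalRing K] (X : Type*) [DecidableEq X] :
    ∃ Ψ : ((finSuppSubmodule K X) →L[K] K) ≃ₗ[K] ((X → K) →L[K] K),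
      ∀ ℓ : (finSuppSubmodule K X) →L[K] K,
        (∀ f : X → K, HasSum (fun x : X => f x * ℓ (deltaFin K x)) (Ψ ℓ f)) ∧
        (∀ p : finSuppSubmodule K X, Ψ ℓ (p : X → K) = ℓ p) := by
  let R := LinearEquiv.ofBijective (restrictFinSupp K X)
    ⟨restrictFinSupp_injective, restrictFinSupp_surjective⟩
  refine ⟨R.symm, fun ℓ => ?_⟩
  have hext : ∀ p : finSuppSubmodule K X, R.symm ℓ p = ℓ p := fun p =>
    DFunLike.congr_fun (R.apply_symm_apply ℓ) p
  refine ⟨fun f => ?_, hext⟩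
  simpa only [← hext, coe_deltaFin] using (R.symm ℓ).hasSum_mul_apply_single f
end
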